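/- arXiv:math/0210234 — 2 statements merged into one kernel-verified Lean document; each statement's English description precedes it below -/
import Mathlib

section
/- Let b(c) = 4π( 4c + 2c² log((c−1)/(c+1)) + (16/3)·c/(c²−1) ), defined for real c with |c| > 1. Then b is strictly decreasing on (−∞,−1) and strictly decreasing on (1,+∞); moreover lim_{c→1⁺} b(c) = +∞, lim_{c→−1⁻} b(c) = −∞, and lim_{|c|→∞} b(c) = 0. -/
open Filter

noncomputable section

/-- The strength `b(c)` of the Dirac-delta external force corresponding to the
stationary Landau/Tian–Xin solutions:
`b(c) = 4π( 4c + 2c² log((c−1)/(c+1)) + (16/3)·c/(c²−1) )`. -/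
def bconst (c : ℝ) : ℝ :=
  4 * Real.pi *
    (4 * c + 2 * c ^ 2 * Real.log ((c - 1) / (c + 1)) + (16 / 3) * (c / (c ^ 2 - 1)))

/-!
For `c > 1`, expanding `log ((c - 1) / (c + 1)) = -∑ₖ 2 c^{-(2k+1)} / (2k+1)` and
`c / (c² - 1) = ∑ₖ c^{-(2k+1)}` makes the terms `4c` cancel, leaving
`b(c) = 4π ∑ₖ (16/3 - 4/(2k+3)) c^{-(2k+1)}`. Every coefficient lies in `[4, 16/3]`, so `b` is
strictly decreasing on `(1, ∞)` and is squeezed between `16π` and `64π/3` times `c / (c² - 1)`,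
which tends to `+∞` at `1⁺` and to `0` at `+∞`. As `b` is odd, the statements on `(-∞, -1)`
follow.
-/

open Real Set Topology

lemma hasSum_log_sub_one_div_add_one {c : ℝ} (hc : 1 < c) :
    HasSum (fun k : ℕ => -(2 / (2 * k + 1)) * c⁻¹ ^ (2 * k + 1)) (log ((c - 1) / (c + 1))) := by
  have h := (hasSum_log_one_add_inv (a := (c - 1) / 2) (by linarith)).neg
  have hc' : c - 1 ≠ 0 := by linarith
  have hsub : 1 + ((c - 1) / 2)⁻¹ = ((c - 1) / (c + 1))⁻¹ := by
    field_simp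
    ring
  rw [hsub, log_inv, neg_neg, show 2 * ((c - 1) / 2) + 1 = c by ring] at h
  exact h.congr_fun fun k => by ring

lemma hasSum_inv_pow_two_mul_add_one {c : ℝ} (hc : 1 < c) :
    HasSum (fun k : ℕ => c⁻¹ ^ (2 * k + 1)) (c / (c ^ 2 - 1)) := by
  have h0 : 0 ≤ c⁻¹ ^ 2 := by positivity
  have h1 : c⁻¹ ^ 2 < 1 := pow_lt_one₀ (by positivity) (inv_lt_one_of_one_lt₀ hc) two_ne_zero
  have hc0 : c ≠ 0 := by positivity
  have hc2 : c ^ 2 - 1 ≠ 0 := by nlinarith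
  have hval : c / (c ^ 2 - 1) = c⁻¹ * (1 - c⁻¹ ^ 2)⁻¹ := by
    field_simp
  rw [hval]
  exact ((hasSum_geometric_of_lt_one h0 h1).mul_left c⁻¹).congr_fun fun k => by ring

def bconstCoeff (k : ℕ) : ℝ := 16 / 3 - 4 / (2 * k + 3)

lemma hasSum_bconst {c : ℝ} (hc : 1 < c) :
    HasSum (fun k : ℕ => 4 * π * bconstCoeff k * c⁻¹ ^ (2 * k + 1)) (bconst c) := by
  have hlog := (hasSum_log_sub_one_div_add_one hc).mul_left (2 * c ^ 2)
  rw [← hasSum_nat_add_iff' 1, Finset.sum_range_one] at hlog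
  have hsum := (hlog.add ((hasSum_inv_pow_two_mul_add_one hc).mul_left (16 / 3))).mul_left (4 * π)
  have hc0 : c ≠ 0 := by positivity
  have hcc : c ^ 2 * c⁻¹ ^ 2 = 1 := by rw [← mul_pow, mul_inv_cancel₀ hc0, one_pow]
  -- the `k = 0` term of `2c² log ((c - 1) / (c + 1))` is `-4c` and cancels the `4c` in `bconst`
  convert! hsum using 1
  · ext k
    rw [bconstCoeff, show 2 * (k + 1) + 1 = 2 * k + 1 + 2 by ring, pow_add]
    push_cast
    linear_combination (16 * π / (2 * k + 3)) * c⁻¹ ^ (2 * k + 1) * hcc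
  · rw [bconst]
    push_cast
    linear_combination (-16 * π * c) * mul_inv_cancel₀ hc0

lemma four_le_bconstCoeff (k : ℕ) : 4 ≤ bconstCoeff k := by
  have : 4 / (2 * (k : ℝ) + 3) ≤ 4 / 3 := by gcongr; linarith [k.cast_nonneg (α := ℝ)]
  rw [bconstCoeff]
  linarith

lemma bconstCoeff_le (k : ℕ) : bconstCoeff k ≤ 16 / 3 := by
  rw [bconstCoeff]
  linarith [show 0 ≤ 4 / (2 * (k : ℝ) + 3) by positivity]

lemma mul_div_sq_sub_one_le_bconst {c : ℝ} (hc : 1 < c) :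
    16 * π * (c / (c ^ 2 - 1)) ≤ bconst c := by
  refine hasSum_le (fun k => ?_) ((hasSum_inv_pow_two_mul_add_one hc).mul_left (16 * π))
    (hasSum_bconst hc)
  refine mul_le_mul_of_nonneg_right ?_ (pow_nonneg (inv_nonneg.2 (by linarith)) _)
  nlinarith [four_le_bconstCoeff k, pi_pos]

lemma bconst_le_mul_div_sq_sub_one {c : ℝ} (hc : 1 < c) :
    bconst c ≤ 64 * π / 3 * (c / (c ^ 2 - 1)) := by
  refine hasSum_le (fun k => ?_) (hasSum_bconst hc)
    ((hasSum_inv_pow_two_mul_add_one hc).mul_left (64 * π / 3))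
  refine mul_le_mul_of_nonneg_right ?_ (pow_nonneg (inv_nonneg.2 (by linarith)) _)
  nlinarith [bconstCoeff_le k, pi_pos]

lemma strictAntiOn_bconst_Ioi : StrictAntiOn bconst (Ioi 1) := by
  intro c hc d hd hcd
  have hd0 : 0 < d := by linarith [mem_Ioi.1 hd]
  have hinv : d⁻¹ < c⁻¹ := inv_strictAnti₀ (by linarith [mem_Ioi.1 hc]) hcd
  have hcoeff (k : ℕ) : 0 < 4 * π * bconstCoeff k := by
    nlinarith [four_le_bconstCoeff k, pi_pos]
  refine hasSum_lt (i := 0) (fun k => ?_) ?_ (hasSum_bconst hd) (hasSum_bconst hc)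
  · have := hcoeff k
    gcongr
  · simpa using mul_lt_mul_of_pos_left hinv (hcoeff 0)

lemma div_sq_sub_one_eq_inv_add_inv {c : ℝ} (h₁ : c - 1 ≠ 0) (h₂ : c + 1 ≠ 0) :
    c / (c ^ 2 - 1) = ((c - 1)⁻¹ + (c + 1)⁻¹) / 2 := by
  rw [show c ^ 2 - 1 = (c - 1) * (c + 1) by ring]
  field_simp
  ring

lemma tendsto_div_sq_sub_one_nhdsGT_one :
    Tendsto (fun c : ℝ => c / (c ^ 2 - 1)) (𝓝[>] 1) atTop := by
  have hsub : Tendsto (fun c : ℝ => c - 1) (𝓝[>] 1) (𝓝[>] 0) := by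
    have := (map_subRight_nhdsGT (c := (1 : ℝ)) (a := 1)).le
    rwa [sub_self] at this
  have hadd : Tendsto (fun c : ℝ => (c + 1)⁻¹) (𝓝[>] 1) (𝓝 (1 + 1)⁻¹) :=
    (((continuous_add_const 1).tendsto 1).inv₀ (by norm_num)).mono_left nhdsWithin_le_nhds
  refine (((tendsto_inv_nhdsGT_zero.comp hsub).atTop_add hadd).atTop_div_const two_pos).congr' ?_
  filter_upwards [self_mem_nhdsWithin] with c (hc : 1 < c)
  exact (div_sq_sub_one_eq_inv_add_inv (by linarith) (by linarith)).symm

lemma tendsto_div_sq_sub_one_atTop : Tendsto (fun c : ℝ => c / (c ^ 2 - 1)) atTop (𝓝 0) := by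
  have h (a : ℝ) : Tendsto (fun c : ℝ => (c + a)⁻¹) atTop (𝓝 0) :=
    tendsto_inv_atTop_zero.comp (tendsto_atTop_add_const_right _ a tendsto_id)
  have hsum := ((h (-1)).add (h 1)).div_const 2
  rw [add_zero, zero_div] at hsum
  refine hsum.congr' ?_
  filter_upwards [eventually_gt_atTop 1] with c hc
  rw [div_sq_sub_one_eq_inv_add_inv (by linarith) (by linarith), sub_eq_add_neg]

lemma tendsto_bconst_nhdsGT_one : Tendsto bconst (𝓝[>] 1) atTop := by
  refine tendsto_atTop_mono' _ ?_ (tendsto_div_sq_sub_one_nhdsGT_one.const_mul_atTop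
    (by positivity : (0 : ℝ) < 16 * π))
  filter_upwards [self_mem_nhdsWithin] with c hc
  exact mul_div_sq_sub_one_le_bconst hc

lemma tendsto_bconst_atTop : Tendsto bconst atTop (𝓝 0) := by
  have h (a : ℝ) : Tendsto (fun c : ℝ => a * (c / (c ^ 2 - 1))) atTop (𝓝 0) := by
    simpa using tendsto_div_sq_sub_one_atTop.const_mul a
  refine tendsto_of_tendsto_of_tendsto_of_le_of_le' (h (16 * π)) (h (64 * π / 3)) ?_ ?_
  · filter_upwards [eventually_gt_atTop 1] with c hc
    exact mul_div_sq_sub_one_le_bconst hc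
  · filter_upwards [eventually_gt_atTop 1] with c hc
    exact bconst_le_mul_div_sq_sub_one hc

lemma bconst_neg (c : ℝ) : bconst (-c) = -bconst c := by
  have h : (-c - 1) / (-c + 1) = ((c - 1) / (c + 1))⁻¹ := by
    rw [inv_div, ← neg_div_neg_eq]
    ring_nf
  rw [bconst, bconst, h, log_inv]
  ring

lemma strictAntiOn_bconst_Iio : StrictAntiOn bconst (Iio (-1)) := by
  intro c (hc : c < -1) d (hd : d < -1) hcd
  have := strictAntiOn_bconst_Ioi (lt_neg_of_lt_neg hd) (lt_neg_of_lt_neg hc) (neg_lt_neg hcd)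
  rw [bconst_neg, bconst_neg] at this
  linarith

lemma tendsto_bconst_nhdsLT_neg_one : Tendsto bconst (𝓝[<] (-1)) atBot := by
  have hneg := tendsto_neg_nhdsLT (a := (-1 : ℝ))
  rw [neg_neg] at hneg
  have := (tendsto_neg_atTop_atBot.comp tendsto_bconst_nhdsGT_one).comp hneg
  simpa [Function.comp_def, bconst_neg] using this

lemma tendsto_bconst_atBot : Tendsto bconst atBot (𝓝 0) := by
  simpa [Function.comp_def, bconst_neg] using
    (tendsto_bconst_atTop.comp tendsto_neg_atBot_atTop).neg

/-- **Monotonicity and limits of `b(c)`:** `b` is strictly decreasing on `(−∞,−1)`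
and on `(1,∞)`; moreover `b(c) → +∞` as `c → 1⁺`, `b(c) → −∞` as `c → −1⁻`,
and `b(c) → 0` as `c → +∞` and as `c → −∞`. -/
theorem bconst_monotone_and_limits :
    StrictAntiOn bconst (Set.Iio (-1 : ℝ)) ∧
    StrictAntiOn bconst (Set.Ioi (1 : ℝ)) ∧
    Tendsto bconst (nhdsWithin 1 (Set.Ioi 1)) atTop ∧
    Tendsto bconst (nhdsWithin (-1) (Set.Iio (-1))) atBot ∧
    Tendsto bconst atTop (nhds 0) ∧
    Tendsto bconst atBot (nhds 0) :=
  ⟨strictAntiOn_bconst_Iio, strictAntiOn_bconst_Ioi, tendsto_bconst_nhdsGT_one,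
    tendsto_bconst_nhdsLT_neg_one, tendsto_bconst_atTop, tendsto_bconst_atBot⟩
end
end

section
/- Let F̂ : ℝ³ × [0,∞) → ℂ³ be jointly measurable with sup_{t≥0} ess sup_ξ |F̂(ξ,t)| < ∞ and lim_{t→∞} ess sup_ξ |F̂(ξ,t)| = 0. Then lim_{t→∞} ess sup_{ξ∈ℝ³} |ξ|² | ∫₀ᵗ e^{−(t−τ)|ξ|²} P̂(ξ) F̂(ξ,τ) dτ | = 0. -/
open MeasureTheory Filter
open scoped ENNReal

noncomputable section

abbrev E3 : Type := EuclideanSpace ℝ (Fin 3)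
abbrev V3 : Type := Fin 3 → ℂ

/-- The `PM^a` norm (on the Fourier side): `ess sup_ξ |ξ|^a |g(ξ)|`, valued in `ℝ≥0∞`. -/
def PMnorm (a : ℝ) (g : E3 → V3) : ℝ≥0∞ :=
  essSup (fun ξ : E3 => ENNReal.ofReal (‖ξ‖ ^ a * ‖g ξ‖)) volume

/-- The symbol `P̂(ξ)_{jk} = δ_{jk} − ξ_j ξ_k / |ξ|²` of the Leray projector. -/
def LerayP (ξ : E3) : Matrix (Fin 3) (Fin 3) ℂ :=
  fun j k => (if j = k then (1 : ℂ) else 0) - ((ξ j : ℂ) * (ξ k : ℂ)) / ((‖ξ‖ : ℂ) ^ 2)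

/-- The matrix-valued convolution
`Ŵ[v,w](ξ)_{jk} = (2π)^{-3/2} ∫ v_j(ξ−z) w_k(z) dz`
(the Fourier transform of the tensor product `v ⊗ w`). -/
def Wconv (v w : E3 → V3) (ξ : E3) : Matrix (Fin 3) (Fin 3) ℂ :=
  fun j k => (((2 * Real.pi) ^ ((3 : ℝ) / 2))⁻¹ : ℝ) • ∫ z : E3, v (ξ - z) j * w z k

/-- The vector `iξ·Ŵ[v,w](ξ)`, with components `Σ_k iξ_k Ŵ[v,w](ξ)_{jk}`. -/
def ixW (v w : E3 → V3) (ξ : E3) : V3 :=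
  fun j => ∑ k : Fin 3, Complex.I * (ξ k : ℂ) * Wconv v w ξ j k

/-- The Fourier side of the Duhamel force term `∫₀ᵗ S(t−τ) P F(τ) dτ`. -/
def Fterm (F : E3 → ℝ → V3) (ξ : E3) (t : ℝ) : V3 :=
  ∫ τ in (0 : ℝ)..t, Real.exp (-(t - τ) * ‖ξ‖ ^ 2) • (LerayP ξ).mulVec (F ξ τ)

/-- `sup_{t ≥ 0} ‖u(t)‖_{PM^a}`. -/
def supPM (a : ℝ) (u : E3 → ℝ → V3) : ℝ≥0∞ :=
  ⨆ (t : ℝ) (_ : 0 ≤ t), PMnorm a (fun ξ => u ξ t)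

/-! Split the Duhamel integral at a time `T` after which `|F̂(ξ, τ)| ≤ ε`. On `[T, t]` the heat
factor integrates to at most `1 / |ξ|²`, so that part contributes at most `ε` to the `PM²` norm.
On `[0, T]` the heat factor is at most `e^{-(t-T)|ξ|²}`, and `|ξ|² e^{-(t-T)|ξ|²} ≤ 1 / (t - T)`
bounds that part by `M T / (t - T)` uniformly in `ξ`, where `M` bounds `|F̂|`. The Leray symbol
`P̂(ξ)` is bounded uniformly in `ξ`, and Fubini turns the bounds "for every `τ`, for a.e. `ξ`"
given by the `PM` norms into bounds "for a.e. `ξ`, for a.e. `τ`". -/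

lemma norm_LerayP_apply_le (ξ : E3) (j k : Fin 3) : ‖LerayP ξ j k‖ ≤ 2 := by
  have hdiag : ‖(if j = k then (1 : ℂ) else 0)‖ ≤ 1 := by split_ifs <;> simp
  have hrank1 : ‖((ξ j : ℂ) * (ξ k : ℂ)) / ((‖ξ‖ : ℂ) ^ 2)‖ ≤ 1 := by
    simp only [norm_div, norm_mul, norm_pow, Complex.norm_real, norm_norm]
    refine div_le_one_of_le₀ ?_ (sq_nonneg _)
    rw [sq]
    exact mul_le_mul (PiLp.norm_apply_le ξ j) (PiLp.norm_apply_le ξ k) (norm_nonneg _)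
      (norm_nonneg _)
  calc ‖LerayP ξ j k‖ ≤ 1 + 1 := (norm_sub_le _ _).trans (add_le_add hdiag hrank1)
    _ = 2 := by norm_num

lemma norm_LerayP_mulVec_le (ξ : E3) (v : V3) : ‖(LerayP ξ).mulVec v‖ ≤ 6 * ‖v‖ := by
  refine (pi_norm_le_iff_of_nonneg (by positivity)).2 fun j => ?_
  calc ‖∑ k, LerayP ξ j k * v k‖ ≤ ∑ k : Fin 3, ‖LerayP ξ j k‖ * ‖v k‖ :=
        (norm_sum_le _ _).trans_eq (by simp only [norm_mul])
    _ ≤ ∑ _k : Fin 3, 2 * ‖v‖ := Finset.sum_le_sum fun k _ =>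
        mul_le_mul (norm_LerayP_apply_le ξ j k) (norm_le_pi_norm v k) (norm_nonneg _) zero_le_two
    _ = 6 * ‖v‖ := by simp only [Finset.sum_const, Finset.card_univ, Fintype.card_fin]; ring

lemma ae_norm_le_of_PMnorm_zero_le {g : E3 → V3} {c : ℝ} (hc : 0 ≤ c)
    (h : PMnorm 0 g ≤ ENNReal.ofReal c) : ∀ᵐ ξ, ‖g ξ‖ ≤ c := by
  filter_upwards [ae_le_essSup (f := fun ξ : E3 => ENNReal.ofReal (‖ξ‖ ^ (0 : ℝ) * ‖g ξ‖))]
    with ξ hξ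
  rw [Real.rpow_zero, one_mul] at hξ
  exact (ENNReal.ofReal_le_ofReal_iff hc).1 (hξ.trans h)

lemma ae_ae_norm_le_of_PMnorm_zero_le {F : E3 → ℝ → V3}
    (hFm : Measurable (fun p : E3 × ℝ => F p.1 p.2)) {S : Set ℝ} (hS : MeasurableSet S)
    {c : ℝ} (hc : 0 ≤ c) (h : ∀ τ ∈ S, PMnorm 0 (fun ξ => F ξ τ) ≤ ENNReal.ofReal c) :
    ∀ᵐ ξ, ∀ᵐ τ, τ ∈ S → ‖F ξ τ‖ ≤ c := by
  have hmeas : MeasurableSet {p : E3 × ℝ | p.2 ∈ S → ‖F p.1 p.2‖ ≤ c} :=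
    measurableSet_setOfPred.2 <| (measurableSet_setOfPred.1 (measurable_snd hS)).imp
      (measurableSet_setOfPred.1 (measurableSet_le hFm.norm measurable_const))
  rw [Measure.ae_ae_comm hmeas]
  refine ae_of_all _ fun τ => ?_
  by_cases hτ : τ ∈ S
  · filter_upwards [ae_norm_le_of_PMnorm_zero_le hc (h τ hτ)] with ξ hξ _ using hξ
  · exact ae_of_all _ fun ξ hτ' => absurd hτ' hτ

section ExpKernel

variable {E : Type*} [NormedAddCommGroup E] [NormedSpace ℝ E]

lemma mul_integral_exp_neg_sub_mul (x a t : ℝ) :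
    x * ∫ τ in a..t, Real.exp (-(t - τ) * x) = 1 - Real.exp (-(t - a) * x) := by
  have hderiv (τ : ℝ) :
      HasDerivAt (fun τ => Real.exp (-(t - τ) * x)) (x * Real.exp (-(t - τ) * x)) τ := by
    have := (((hasDerivAt_id τ).const_sub t).neg.mul_const x).exp
    simpa [mul_comm] using this
  rw [← intervalIntegral.integral_const_mul,
    intervalIntegral.integral_eq_sub_of_hasDerivAt (fun τ _ => hderiv τ)
      (by apply Continuous.intervalIntegrable; fun_prop)]
  simp

lemma mul_exp_neg_mul_le (x : ℝ) {s : ℝ} (hs : 0 < s) :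
    x * Real.exp (-s * x) ≤ 1 / s := by
  rw [le_div_iff₀ hs, mul_right_comm, mul_comm x s, neg_mul]
  exact (Real.mul_exp_neg_le_exp_neg_one _).trans (Real.exp_le_one_iff.2 (by norm_num))

lemma norm_exp_smul (x t τ : ℝ) (v : E) :
    ‖Real.exp (-(t - τ) * x) • v‖ = Real.exp (-(t - τ) * x) * ‖v‖ := by
  rw [norm_smul, Real.norm_eq_abs, Real.abs_exp]

lemma norm_integral_exp_smul_le_of_norm_le {g : ℝ → E} {x c a b t : ℝ} (hx : 0 ≤ x)
    (hab : a ≤ b) (hg : ∀ᵐ τ, τ ∈ Set.Ioc a b → ‖g τ‖ ≤ c) :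
    ‖∫ τ in a..b, Real.exp (-(t - τ) * x) • g τ‖ ≤ Real.exp (-(t - b) * x) * (c * (b - a)) := by
  have hbound : ∀ᵐ τ, τ ∈ Set.uIoc a b → ‖Real.exp (-(t - τ) * x) • g τ‖ ≤
      Real.exp (-(t - b) * x) * c := by
    filter_upwards [hg] with τ hτg hτ
    rw [Set.uIoc_of_le hab] at hτ
    rw [norm_exp_smul]
    exact mul_le_mul (Real.exp_le_exp.2 (by nlinarith [hτ.2])) (hτg hτ) (norm_nonneg _)
      (by positivity)
  simpa [abs_of_nonneg (sub_nonneg.2 hab), mul_assoc] using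
    intervalIntegral.norm_integral_le_of_norm_le_const_ae hbound

lemma mul_norm_integral_exp_smul_le_of_norm_le {g : ℝ → E} {x c a t : ℝ} (hx : 0 ≤ x)
    (hc : 0 ≤ c) (hat : a ≤ t) (hg : ∀ᵐ τ, τ ∈ Set.Ioc a t → ‖g τ‖ ≤ c) :
    x * ‖∫ τ in a..t, Real.exp (-(t - τ) * x) • g τ‖ ≤ c := by
  have hbound : ∀ᵐ τ, τ ∈ Set.Ioc a t → ‖Real.exp (-(t - τ) * x) • g τ‖ ≤
      Real.exp (-(t - τ) * x) * c := by
    filter_upwards [hg] with τ hτg hτ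
    rw [norm_exp_smul]
    exact mul_le_mul_of_nonneg_left (hτg hτ) (by positivity)
  calc x * ‖∫ τ in a..t, Real.exp (-(t - τ) * x) • g τ‖
      ≤ x * ∫ τ in a..t, Real.exp (-(t - τ) * x) * c :=
        mul_le_mul_of_nonneg_left (intervalIntegral.norm_integral_le_of_norm_le hat hbound
          (by apply Continuous.intervalIntegrable; fun_prop)) hx
    _ = (1 - Real.exp (-(t - a) * x)) * c := by
        rw [intervalIntegral.integral_mul_const, ← mul_assoc, mul_integral_exp_neg_sub_mul]
    _ ≤ c := mul_le_of_le_one_left hc (by linarith [Real.exp_pos (-(t - a) * x)])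

lemma mul_norm_integral_exp_smul_le_add {g : ℝ → E} {x M ε T t : ℝ} (hx : 0 ≤ x)
    (hM0 : 0 ≤ M) (hε0 : 0 ≤ ε) (hT : 0 ≤ T) (hTt : T < t) (hg : AEStronglyMeasurable g)
    (hM : ∀ᵐ τ, 0 ≤ τ → ‖g τ‖ ≤ M) (hε : ∀ᵐ τ, T ≤ τ → ‖g τ‖ ≤ ε) :
    x * ‖∫ τ in (0 : ℝ)..t, Real.exp (-(t - τ) * x) • g τ‖ ≤ M * T / (t - T) + ε := by
  set f := fun τ => Real.exp (-(t - τ) * x) • g τ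
  have hint {a b : ℝ} (ha : 0 ≤ a) (hb : 0 ≤ b) : IntervalIntegrable f volume a b := by
    refine IntervalIntegrable.mono_fun' (g := fun τ => Real.exp (-(t - τ) * x) * M)
      (by apply Continuous.intervalIntegrable; fun_prop)
      ((by fun_prop : Continuous _).aestronglyMeasurable.smul hg).restrict ?_
    filter_upwards [ae_restrict_of_ae hM, ae_restrict_mem measurableSet_uIoc] with τ hτM hτ
    rw [norm_exp_smul]
    exact mul_le_mul_of_nonneg_left (hτM ((le_min ha hb).trans hτ.1.le)) (by positivity)
  have hhead : ‖∫ τ in (0 : ℝ)..T, f τ‖ ≤ Real.exp (-(t - T) * x) * (M * T) := by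
    simpa only [sub_zero] using
      norm_integral_exp_smul_le_of_norm_le hx hT (hM.mono fun τ h hτ => h hτ.1.le)
  have htail : x * ‖∫ τ in T..t, f τ‖ ≤ ε :=
    mul_norm_integral_exp_smul_le_of_norm_le hx hε0 hTt.le (hε.mono fun τ h hτ => h hτ.1.le)
  calc x * ‖∫ τ in (0 : ℝ)..t, f τ‖
      ≤ x * ‖∫ τ in (0 : ℝ)..T, f τ‖ + x * ‖∫ τ in T..t, f τ‖ := by
        rw [← intervalIntegral.integral_add_adjacent_intervals (hint le_rfl hT)
            (hint hT (hT.trans hTt.le)), ← mul_add]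
        exact mul_le_mul_of_nonneg_left (norm_add_le _ _) hx
    _ ≤ x * Real.exp (-(t - T) * x) * (M * T) + ε := by
        rw [mul_assoc x]
        exact add_le_add (mul_le_mul_of_nonneg_left hhead hx) htail
    _ ≤ 1 / (t - T) * (M * T) + ε := by
        gcongr
        exact mul_exp_neg_mul_le x (sub_pos.2 hTt)
    _ = M * T / (t - T) + ε := by ring

end ExpKernel

lemma sq_norm_mul_norm_Fterm_le {F : E3 → ℝ → V3} {ξ : E3} {M ε T t : ℝ} (hM0 : 0 ≤ M)
    (hε0 : 0 ≤ ε) (hT : 0 ≤ T) (hTt : T < t) (hF : Measurable (F ξ))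
    (hM : ∀ᵐ τ, 0 ≤ τ → ‖F ξ τ‖ ≤ M) (hε : ∀ᵐ τ, T ≤ τ → ‖F ξ τ‖ ≤ ε) :
    ‖ξ‖ ^ 2 * ‖Fterm F ξ t‖ ≤ 6 * (M * T / (t - T) + ε) := by
  have hLeray {c : ℝ} {τ : ℝ} (h : ‖F ξ τ‖ ≤ c) : ‖(LerayP ξ).mulVec (F ξ τ)‖ ≤ 6 * c :=
    (norm_LerayP_mulVec_le ξ _).trans (by linarith)
  have := mul_norm_integral_exp_smul_le_add (g := fun τ => (LerayP ξ).mulVec (F ξ τ))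
    (sq_nonneg ‖ξ‖) (by positivity) (by positivity) hT hTt
    ((by fun_prop : Continuous (LerayP ξ).mulVec).measurable.comp hF).aestronglyMeasurable
    (hM.mono fun τ h hτ => hLeray (h hτ)) (hε.mono fun τ h hτ => hLeray (h hτ))
  exact this.trans_eq (by ring)

lemma PMnorm_two_Fterm_le {F : E3 → ℝ → V3} (hFm : Measurable (fun p : E3 × ℝ => F p.1 p.2))
    {M ε T t : ℝ} (hM0 : 0 ≤ M) (hε0 : 0 ≤ ε) (hT : 0 ≤ T) (hTt : T < t)
    (hM : ∀ᵐ ξ, ∀ᵐ τ, 0 ≤ τ → ‖F ξ τ‖ ≤ M) (hε : ∀ᵐ ξ, ∀ᵐ τ, T ≤ τ → ‖F ξ τ‖ ≤ ε) :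
    PMnorm 2 (fun ξ => Fterm F ξ t) ≤ ENNReal.ofReal (6 * (M * T / (t - T) + ε)) := by
  refine essSup_le_of_ae_le _ ?_
  filter_upwards [hM, hε] with ξ hξM hξε
  rw [Real.rpow_two]
  exact ENNReal.ofReal_le_ofReal <| sq_norm_mul_norm_Fterm_le hM0 hε0 hT hTt
    (hFm.comp measurable_prodMk_left) hξM hξε

lemma ENNReal.tendsto_nhds_zero_of_eventually_le_ofReal {α : Type*} {l : Filter α}
    {f : α → ℝ≥0∞} (h : ∀ ε : ℝ, 0 < ε → ∀ᶠ x in l, f x ≤ ENNReal.ofReal ε) :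
    Tendsto f l (nhds 0) := by
  refine ENNReal.tendsto_nhds_zero.2 fun ε hε => ?_
  obtain ⟨δ, -, hδ, hδε⟩ := ENNReal.lt_iff_exists_real_btwn.1 hε
  exact (h δ (ENNReal.ofReal_pos.1 hδ)).mono fun x hx => hx.trans hδε.le

/-- **Decay of the Duhamel force term:** if `F ∈ C_w([0,∞), PM)` is bounded and
`‖F(t)‖_{PM} → 0` as `t → ∞`, then `‖∫₀ᵗ S(t−τ)PF(τ)dτ‖_{PM²} → 0` as `t → ∞`. -/
theorem Fterm_decay (F : E3 → ℝ → V3)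
    (hFm : Measurable (fun p : E3 × ℝ => F p.1 p.2))
    (hFbdd : supPM 0 F ≠ ⊤)
    (hFdec : Tendsto (fun t : ℝ => PMnorm 0 (fun ξ => F ξ t)) atTop (nhds 0)) :
    Tendsto (fun t : ℝ => PMnorm 2 (fun ξ => Fterm F ξ t)) atTop (nhds 0) := by
  obtain ⟨M, hM0, hsup⟩ : ∃ M, 0 ≤ M ∧ supPM 0 F = ENNReal.ofReal M :=
    ⟨_, ENNReal.toReal_nonneg, (ENNReal.ofReal_toReal hFbdd).symm⟩
  have hM : ∀ᵐ ξ, ∀ᵐ τ, τ ∈ Set.Ici 0 → ‖F ξ τ‖ ≤ M :=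
    ae_ae_norm_le_of_PMnorm_zero_le hFm measurableSet_Ici hM0 fun τ hτ =>
      (le_iSup₂ (f := fun t (_ : 0 ≤ t) => PMnorm 0 (fun ξ => F ξ t)) τ hτ).trans hsup.le
  refine ENNReal.tendsto_nhds_zero_of_eventually_le_ofReal fun ε hε => ?_
  obtain ⟨T, hT0, hT⟩ :
      ∃ T, 0 ≤ T ∧ ∀ τ ≥ T, PMnorm 0 (fun ξ => F ξ τ) ≤ ENNReal.ofReal (ε / 12) :=
    let ⟨T, hT⟩ := eventually_atTop.1 <|
      ENNReal.tendsto_nhds_zero.1 hFdec _ (ENNReal.ofReal_pos.2 (by positivity))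
    ⟨max T 0, le_max_right T 0, fun τ hτ => hT τ (le_of_max_le_left hτ)⟩
  have hε' : ∀ᵐ ξ, ∀ᵐ τ, τ ∈ Set.Ici T → ‖F ξ τ‖ ≤ ε / 12 :=
    ae_ae_norm_le_of_PMnorm_zero_le hFm measurableSet_Ici (by positivity) hT
  have hhead : Tendsto (fun t => M * T / (t - T)) atTop (nhds 0) :=
    (tendsto_atTop_add_const_right atTop (-T) tendsto_id).const_div_atTop _
  filter_upwards [eventually_gt_atTop T,
    hhead.eventually (ge_mem_nhds (by positivity : 0 < ε / 12))] with t hTt hsmall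
  refine (PMnorm_two_Fterm_le hFm hM0 (by positivity) hT0 hTt hM hε').trans
    (ENNReal.ofReal_le_ofReal ?_)
  linarith
end
end
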